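/- arXiv:chao-dyn/9904019 — 4 statements merged into one kernel-verified Lean document; each statement's English description precedes it below -/
import Mathlib

section
/- Let b, ε ∈ ℝ satisfy |ε|(1+|b|) < 2√(1 − 2/√5). Then for every symbol sequence s : ℤ → ℝ with s_t ∈ {−1, +1} for all t, there exists exactly one bounded sequence z : ℤ → ℝ such that s_t · z_t > 0 for all t ∈ ℤ and ε(z_{t+1} + b z_{t−1}) + 1 − z_t² = 0 for all t ∈ ℤ. -/
/-!
At `ε = 0` the orbit with signs `s` is `s` itself. In general, an orbit with signs `s` is the same
as a fixed point of `z ↦ (t ↦ s_t √(1 + ε (z_{t+1} + b z_{t-1})))` on `ℓ^∞(ℤ)`. Put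
`c = |ε|(1+|b|)`, let `M` be the positive root of `M² = 1 + cM` and `m = √(1 - cM)`. This map
sends the closed set `{z | m ≤ s_t z_t ≤ M}` into itself. There it is a contraction with constant
`c/(2m)`, because `√` has slope at most `1/(2m)` on `[m², ∞)`. The bound on `|ε|(1+|b|)` is exactly
what makes `c < 2m`. Every bounded orbit with signs `s` lies in this set: its supremum `R`
satisfies `R² ≤ 1 + cR`, so `R ≤ M`. Banach's fixed-point theorem then gives existence and
uniqueness.
-/

open Set Function
open scoped BoundedContinuousFunction

theorem ContractingWith.existsUnique_isFixedPt_of_mapsTo {α : Type*} [MetricSpace α]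
    {K : NNReal} {f : α → α} {s : Set α} (hsc : IsComplete s) (hne : s.Nonempty)
    (hsf : MapsTo f s s) (hf : ContractingWith K (hsf.restrict f s s)) :
    ∃! x, x ∈ s ∧ IsFixedPt f x := by
  obtain ⟨x, hx⟩ := hne
  obtain ⟨y, hys, hfy, -⟩ := hf.exists_fixedPoint' hsc hsf hx (edist_ne_top x (f x))
  refine ⟨y, ⟨hys, hfy⟩, fun z ⟨hzs, hfz⟩ => ?_⟩
  exact congrArg Subtype.val <|
    hf.fixedPoint_unique' (x := ⟨z, hzs⟩) (y := ⟨y, hys⟩) (Subtype.ext hfz) (Subtype.ext hfy)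

theorem Real.two_mul_mul_abs_sqrt_sub_sqrt_le {a b μ : ℝ} (hμ : 0 ≤ μ) (ha : μ ^ 2 ≤ a)
    (hb : μ ^ 2 ≤ b) : 2 * μ * |√a - √b| ≤ |a - b| := by
  have hμa : μ ≤ √a := (le_abs_self μ).trans (Real.abs_le_sqrt ha)
  have hμb : μ ≤ √b := (le_abs_self μ).trans (Real.abs_le_sqrt hb)
  have hdiff : a - b = (√a - √b) * (√a + √b) := by
    rw [mul_comm, ← sq_sub_sq, Real.sq_sqrt (by nlinarith), Real.sq_sqrt (by nlinarith)]
  rw [hdiff, abs_mul, abs_of_nonneg (by linarith : 0 ≤ √a + √b), mul_comm]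
  gcongr
  linarith

theorem abs_eq_mul_of_abs_eq_one {R : Type*} [Ring R] [LinearOrder R] [IsStrictOrderedRing R]
    {σ x : R} (hσ : |σ| = 1) (h : 0 ≤ σ * x) : |x| = σ * x := by
  rw [← one_mul |x|, ← hσ, ← abs_mul, abs_of_nonneg h]

namespace Henon

section Orbits

variable (b ε : ℝ)

def coupling (z : ℤ → ℝ) (t : ℤ) : ℝ := ε * (z (t + 1) + b * z (t - 1))

def IsOrbit (z : ℤ → ℝ) : Prop := ∀ t, coupling b ε z t + 1 - z t ^ 2 = 0

variable {b ε}

theorem IsOrbit.sq_eq {z : ℤ → ℝ} (hz : IsOrbit b ε z) (t : ℤ) :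
    z t ^ 2 = 1 + coupling b ε z t := by
  linarith [hz t]

theorem coupling_sub (x y : ℤ → ℝ) (t : ℤ) :
    coupling b ε x t - coupling b ε y t = coupling b ε (fun t => x t - y t) t := by
  simp only [coupling]
  ring

theorem abs_coupling_le {z : ℤ → ℝ} {R : ℝ} (hz : ∀ t, |z t| ≤ R) (t : ℤ) :
    |coupling b ε z t| ≤ |ε| * (1 + |b|) * R := by
  calc |coupling b ε z t| ≤ |ε| * (|z (t + 1)| + |b| * |z (t - 1)|) := by
        rw [coupling, abs_mul, ← abs_mul b]
        gcongr
        exact abs_add_le _ _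
    _ ≤ |ε| * (R + |b| * R) := by gcongr <;> apply hz
    _ = |ε| * (1 + |b|) * R := by ring

variable {c M : ℝ}

theorem one_add_coupling_mem_Icc (hc : |ε| * (1 + |b|) ≤ c) {z : ℤ → ℝ}
    (hz : ∀ t, |z t| ≤ M) (t : ℤ) :
    1 + coupling b ε z t ∈ Icc (1 - c * M) (1 + c * M) := by
  have hM : 0 ≤ M := (abs_nonneg _).trans (hz 0)
  have h := (abs_coupling_le hz t).trans (mul_le_mul_of_nonneg_right hc hM)
  constructor <;> linarith [abs_le.1 h]

theorem abs_le_of_isOrbit (hc : |ε| * (1 + |b|) ≤ c) (hM : 0 ≤ M) (hMsq : M ^ 2 = 1 + c * M)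
    {z : ℤ → ℝ} (hz : IsOrbit b ε z) (hbdd : BddAbove (range fun t => |z t|)) (t : ℤ) :
    |z t| ≤ M := by
  set R := ⨆ t, |z t|
  have hzR : ∀ t, |z t| ≤ R := fun t => le_ciSup hbdd t
  have hR : 0 ≤ R := (abs_nonneg _).trans (hzR 0)
  have hsq : ∀ t, z t ^ 2 ≤ 1 + c * R := fun t => by
    rw [hz.sq_eq]
    exact (one_add_coupling_mem_Icc hc hzR t).2
  have hRsq : R ^ 2 ≤ 1 + c * R :=
    (Real.le_sqrt hR (by nlinarith [hsq 0])).1 (ciSup_le fun t => Real.abs_le_sqrt (hsq t))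
  have hRM : R ≤ M := by
    by_contra! h
    nlinarith [mul_pos (sub_pos.2 h) (by nlinarith : 0 < R + M - c)]
  exact (hzR t).trans hRM

end Orbits

/-- Where `2√(1 - 2/√5)` comes from: for the positive root `M` of `M² = 1 + cM`, the bound on `c`
says `cM < 2/√5`, and since `c²(1 + cM) = (cM)²`, the condition `5(cM)² < 4` is `c² < 4(1 - cM)`. -/
theorem exists_radii {c : ℝ} (hc0 : 0 ≤ c) (hc : c < 2 * √(1 - 2 / √5)) :
    ∃ m M : ℝ, 0 < m ∧ m ≤ 1 ∧ 1 ≤ M ∧ m ^ 2 = 1 - c * M ∧ M ^ 2 = 1 + c * M ∧ c < 2 * m := by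
  set r := 2 / √5
  have h5 : √5 ^ 2 = 5 := Real.sq_sqrt (by norm_num)
  have hr : 5 * r ^ 2 = 4 := by
    simp only [r, div_pow, h5]
    norm_num
  have hr0 : 0 < r := by positivity
  have hc2 : c ^ 2 < 4 * (1 - r) := by
    have := (Real.lt_sqrt (by positivity)).1 (show c / 2 < √(1 - r) by linarith)
    linarith
  set M := (c + √(c ^ 2 + 4)) / 2
  have hD : √(c ^ 2 + 4) ^ 2 = c ^ 2 + 4 := Real.sq_sqrt (by positivity)
  have hD2 : 2 ≤ √(c ^ 2 + 4) := (Real.le_sqrt (by norm_num) (by positivity)).2 (by nlinarith)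
  have hMsq : M ^ 2 = 1 + c * M := by
    simp only [M]
    nlinarith
  have h1M : 1 ≤ M := by
    simp only [M]
    linarith
  have hprod : (c * M) ^ 2 = c ^ 2 * (1 + c * M) := by rw [mul_pow, hMsq]
  have hcM : c * M < r := by
    by_contra! hq
    nlinarith [mul_nonneg (sub_nonneg.2 hq) (by positivity : 0 ≤ c * M + r + c * M * r),
      mul_pos (sub_pos.2 hc2) (by positivity : 0 < (1 + c * M) * (1 + r))]
  have hcm : c ^ 2 < 4 * (1 - c * M) := by
    nlinarith [mul_pos hr0 (by positivity : 0 < r + c * M)]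
  refine ⟨√(1 - c * M), M, Real.sqrt_pos.2 (by nlinarith), Real.sqrt_le_one.2 (by nlinarith),
    h1M, Real.sq_sqrt (by nlinarith), hMsq, ?_⟩
  nlinarith [(Real.lt_sqrt (by positivity : 0 ≤ c / 2)).2 (by nlinarith : (c / 2) ^ 2 < 1 - c * M)]

section Map

variable {b ε c m M : ℝ} {s : ℤ →ᵇ ℝ}

variable (b ε) in
noncomputable def aiMap (s z : ℤ →ᵇ ℝ) : ℤ →ᵇ ℝ :=
  .ofNormedAddCommGroupDiscrete (fun t => s t * √(1 + coupling b ε z t))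
    (‖s‖ * √(1 + |ε| * (1 + |b|) * ‖z‖)) fun t => by
      rw [norm_mul, Real.norm_of_nonneg (Real.sqrt_nonneg _)]
      gcongr
      · exact s.norm_coe_le_norm t
      · exact (le_abs_self _).trans (abs_coupling_le z.norm_coe_le_norm t)

theorem aiMap_apply (z : ℤ →ᵇ ℝ) (t : ℤ) :
    aiMap b ε s z t = s t * √(1 + coupling b ε z t) := rfl

def signBand (s : ℤ →ᵇ ℝ) (m M : ℝ) : Set (ℤ →ᵇ ℝ) := {z | ∀ t, s t * z t ∈ Icc m M}

theorem isClosed_signBand : IsClosed (signBand s m M) := by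
  simp only [signBand, ofPred_forall]
  exact isClosed_iInter fun t =>
    isClosed_Icc.preimage (continuous_const.mul (continuous_eval_const t))

theorem self_mem_signBand (hs : ∀ t, |s t| = 1) (hm : m ≤ 1) (hM : 1 ≤ M) :
    s ∈ signBand s m M := fun t => by
  rw [← abs_mul_abs_self, hs t, one_mul]
  exact ⟨hm, hM⟩

theorem one_add_coupling_mem_Icc_sq (hs : ∀ t, |s t| = 1) (hc : |ε| * (1 + |b|) ≤ c)
    (hm : 0 ≤ m) (hmsq : m ^ 2 = 1 - c * M) (hMsq : M ^ 2 = 1 + c * M) {z : ℤ →ᵇ ℝ}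
    (hz : z ∈ signBand s m M) (t : ℤ) : 1 + coupling b ε z t ∈ Icc (m ^ 2) (M ^ 2) := by
  rw [hmsq, hMsq]
  refine one_add_coupling_mem_Icc hc (fun t => ?_) t
  rw [abs_eq_mul_of_abs_eq_one (hs t) (hm.trans (hz t).1)]
  exact (hz t).2

theorem mapsTo_aiMap (hs : ∀ t, |s t| = 1) (hc : |ε| * (1 + |b|) ≤ c) (hm : 0 ≤ m)
    (hM : 0 ≤ M) (hmsq : m ^ 2 = 1 - c * M) (hMsq : M ^ 2 = 1 + c * M) :
    MapsTo (aiMap b ε s) (signBand s m M) (signBand s m M) := fun z hz t => by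
  obtain ⟨hlo, hhi⟩ := one_add_coupling_mem_Icc_sq hs hc hm hmsq hMsq hz t
  rw [aiMap_apply, ← mul_assoc, ← abs_mul_abs_self, hs t, one_mul, one_mul]
  exact ⟨Real.le_sqrt_of_sq_le hlo, (Real.sqrt_le_left hM).2 hhi⟩

theorem dist_aiMap_le (hs : ∀ t, |s t| = 1) (hc : |ε| * (1 + |b|) ≤ c) (hm : 0 < m)
    (hmsq : m ^ 2 = 1 - c * M) (hMsq : M ^ 2 = 1 + c * M) {x y : ℤ →ᵇ ℝ}
    (hx : x ∈ signBand s m M) (hy : y ∈ signBand s m M) :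
    dist (aiMap b ε s x) (aiMap b ε s y) ≤ c / (2 * m) * dist x y := by
  have hc0 : 0 ≤ c := (by positivity : 0 ≤ |ε| * (1 + |b|)).trans hc
  refine (BoundedContinuousFunction.dist_le (by positivity)).2 fun t => ?_
  have hsqrt := Real.two_mul_mul_abs_sqrt_sub_sqrt_le hm.le
    (one_add_coupling_mem_Icc_sq hs hc hm.le hmsq hMsq hx t).1
    (one_add_coupling_mem_Icc_sq hs hc hm.le hmsq hMsq hy t).1
  have hdiff : |coupling b ε x t - coupling b ε y t| ≤ c * dist x y := by
    rw [coupling_sub]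
    refine (abs_coupling_le (fun t => ?_) t).trans (by gcongr)
    exact (Real.dist_eq _ _).symm.trans_le (x.dist_coe_le_dist t)
  rw [Real.dist_eq, aiMap_apply, aiMap_apply, ← mul_sub, abs_mul, hs t, one_mul,
    div_mul_eq_mul_div, le_div_iff₀ (by positivity), mul_comm]
  calc 2 * m * |√(1 + coupling b ε x t) - √(1 + coupling b ε y t)|
      ≤ |(1 + coupling b ε x t) - (1 + coupling b ε y t)| := hsqrt
    _ ≤ c * dist x y := by rwa [add_sub_add_left_eq_sub]

theorem contractingWith_aiMap (hs : ∀ t, |s t| = 1) (hc : |ε| * (1 + |b|) ≤ c) (hm : 0 < m)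
    (hM : 0 ≤ M) (hmsq : m ^ 2 = 1 - c * M) (hMsq : M ^ 2 = 1 + c * M) (hcm : c < 2 * m) :
    ContractingWith (c / (2 * m)).toNNReal
      ((mapsTo_aiMap hs hc hm.le hM hmsq hMsq).restrict _ _ _) := by
  have hc0 : 0 ≤ c := (by positivity : 0 ≤ |ε| * (1 + |b|)).trans hc
  refine ⟨Real.toNNReal_lt_one.2 ((div_lt_one (by positivity)).2 hcm),
    LipschitzWith.of_dist_le_mul fun x y => ?_⟩
  rw [Real.coe_toNNReal _ (by positivity)]
  exact dist_aiMap_le hs hc hm hmsq hMsq x.2 y.2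

theorem isOrbit_of_isFixedPt (hs : ∀ t, |s t| = 1) (hc : |ε| * (1 + |b|) ≤ c) (hm : 0 ≤ m)
    (hmsq : m ^ 2 = 1 - c * M) (hMsq : M ^ 2 = 1 + c * M) {z : ℤ →ᵇ ℝ}
    (hzD : z ∈ signBand s m M) (hz : IsFixedPt (aiMap b ε s) z) : IsOrbit b ε z := fun t => by
  have hA := (one_add_coupling_mem_Icc_sq hs hc hm hmsq hMsq hzD t).1
  have hsq : z t ^ 2 = 1 + coupling b ε z t := by
    rw [← DFunLike.congr_fun hz t, aiMap_apply, mul_pow, ← sq_abs (s t), hs t, one_pow, one_mul,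
      Real.sq_sqrt ((sq_nonneg m).trans hA)]
  linarith

theorem isFixedPt_aiMap_of_isOrbit (hs : ∀ t, |s t| = 1) {z : ℤ →ᵇ ℝ} (hz : IsOrbit b ε z)
    (hsign : ∀ t, 0 ≤ s t * z t) : IsFixedPt (aiMap b ε s) z := by
  ext t
  rw [aiMap_apply, ← hz.sq_eq, Real.sqrt_sq_eq_abs, abs_eq_mul_of_abs_eq_one (hs t) (hsign t),
    ← mul_assoc, ← abs_mul_abs_self, hs t, one_mul, one_mul]

theorem mem_signBand_of_isOrbit (hs : ∀ t, |s t| = 1) (hc : |ε| * (1 + |b|) ≤ c) (hm : 0 ≤ m)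
    (hM : 0 ≤ M) (hmsq : m ^ 2 = 1 - c * M) (hMsq : M ^ 2 = 1 + c * M) {z : ℤ →ᵇ ℝ}
    (hz : IsOrbit b ε z) (hsign : ∀ t, 0 < s t * z t) : z ∈ signBand s m M := fun t => by
  have hbound : ∀ t, |z t| ≤ M :=
    abs_le_of_isOrbit hc hM hMsq hz ⟨‖z‖, forall_mem_range.2 z.norm_coe_le_norm⟩
  have hlo : m ^ 2 ≤ |z t| ^ 2 := by
    rw [sq_abs, hz.sq_eq, hmsq]
    exact (one_add_coupling_mem_Icc hc hbound t).1
  rw [← abs_eq_mul_of_abs_eq_one (hs t) (hsign t).le]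
  exact ⟨(sq_le_sq₀ hm (abs_nonneg _)).1 hlo, hbound t⟩

end Map

end Henon

open Henon

/-- **Existence and uniqueness of Hénon orbits near the anti-integrable limit.**
If `|ε|(1+|b|) < 2√(1 − 2/√5)`, then for every symbol sequence `s : ℤ → {−1, +1}`
there is exactly one bounded sequence `z : ℤ → ℝ` with `s t * z t > 0` for all `t`
satisfying the Hénon recurrence `ε(z_{t+1} + b z_{t−1}) + 1 − z_t² = 0` for all `t`. -/
theorem henon_ai_exists_unique (b ε : ℝ)
    (hparam : |ε| * (1 + |b|) < 2 * Real.sqrt (1 - 2 / Real.sqrt 5))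
    (s : ℤ → ℝ) (hs : ∀ t : ℤ, s t = -1 ∨ s t = 1) :
    ∃! z : ℤ → ℝ,
      (∃ M : ℝ, ∀ t : ℤ, |z t| ≤ M) ∧
      (∀ t : ℤ, s t * z t > 0) ∧
      (∀ t : ℤ, ε * (z (t + 1) + b * z (t - 1)) + 1 - (z t) ^ 2 = 0) := by
  obtain ⟨m, M, hm, hm1, h1M, hmsq, hMsq, hcm⟩ := exists_radii (by positivity) hparam
  have hs1 : ∀ t, |s t| = 1 := fun t => by rcases hs t with h | h <;> simp [h]
  let S : ℤ →ᵇ ℝ := .ofNormedAddCommGroupDiscrete s 1 fun t => (hs1 t).le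
  obtain ⟨z, ⟨hzD, hzfix⟩, huniq⟩ :=
    ContractingWith.existsUnique_isFixedPt_of_mapsTo isClosed_signBand.isComplete
      ⟨S, self_mem_signBand hs1 hm1 h1M⟩ _
      (contractingWith_aiMap (b := b) (ε := ε) hs1 le_rfl hm (by linarith) hmsq hMsq hcm)
  refine ⟨z, ⟨⟨‖z‖, z.norm_coe_le_norm⟩, fun t => hm.trans_le (hzD t).1,
    isOrbit_of_isFixedPt hs1 le_rfl hm.le hmsq hMsq hzD hzfix⟩, ?_⟩
  rintro w ⟨⟨R, hR⟩, hsign, horbit⟩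
  let W : ℤ →ᵇ ℝ := .ofNormedAddCommGroupDiscrete w R hR
  have hWD : W ∈ signBand S m M :=
    mem_signBand_of_isOrbit hs1 le_rfl hm.le (by linarith) hmsq hMsq horbit hsign
  exact congrArg DFunLike.coe
    (huniq W ⟨hWD, isFixedPt_aiMap_of_isOrbit hs1 horbit fun t => (hsign t).le⟩)
end

section
/- Let b, ε ∈ ℝ satisfy |ε|(1+|b|) < 2√(1 − 2/√5), let s : ℤ → {−1,+1} be a symbol sequence, and let z : ℤ → ℝ be a bounded sequence with s_t · z_t > 0 for all t satisfying ε(z_{t+1} + b z_{t−1}) + 1 − z_t² = 0 for all t. Then the linear operator L on the Banach space ℓ^∞(ℤ, ℝ) defined by (Lv)_t = ε v_{t+1} + ε b v_{t−1} − 2 z_t v_t is a continuous linear bijection whose inverse is also continuous (i.e., L is boundedly invertible). -/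
/-!
Write `L = D + K` with `D v = -2 z v` and `K v = ε (v_{t+1} + b v_{t-1})`, so that
`‖K‖ ≤ c := |ε| (1 + |b|)`. The orbit equation reads `z_t ^ 2 - 1 = (K z)_t`; hence, with
`M = ‖z‖_∞`, we get `M ^ 2 ≤ 1 + c M` and `|z_t| ≥ √(1 - c M)`. The parameter bound says
`c ^ 2 < 4 - 8 / √5`, the smaller root of `5 x ^ 2 - 40 x + 16`, and this together with
`M ^ 2 ≤ 1 + c M` forces `c ^ 2 + 4 c M < 4`, i.e. `‖K‖ ≤ c < 2 √(1 - c M) ≤ ‖D⁻¹‖⁻¹`.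
So `L` is a small perturbation of the invertible diagonal operator `D`, hence invertible.
-/

open scoped ENNReal

noncomputable section

namespace lp

section Precomp

variable {ι κ 𝕜 E : Type*} [NontriviallyNormedField 𝕜] [NormedAddCommGroup E] [NormedSpace 𝕜 E]

theorem memℓp_infty_comp (v : lp (fun _ : κ => E) ∞) (σ : ι → κ) : Memℓp (v ∘ σ) ∞ :=
  memℓp_infty ⟨‖v‖, by rintro _ ⟨i, rfl⟩; exact norm_apply_le_norm ENNReal.top_ne_zero v (σ i)⟩

variable (𝕜 E) in
def precompInfty (σ : ι → κ) : lp (fun _ : κ => E) ∞ →L[𝕜] lp (fun _ : ι => E) ∞ :=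
  LinearMap.mkContinuous
    { toFun v := ⟨v ∘ σ, memℓp_infty_comp v σ⟩
      map_add' _ _ := rfl
      map_smul' _ _ := rfl }
    1 fun v => by
      rw [one_mul]
      exact norm_le_of_forall_le (norm_nonneg v)
        fun i => norm_apply_le_norm ENNReal.top_ne_zero v (σ i)

@[simp]
theorem precompInfty_apply (σ : ι → κ) (v : lp (fun _ : κ => E) ∞) (i : ι) :
    precompInfty 𝕜 E σ v i = v (σ i) := rfl

theorem norm_precompInfty_le (σ : ι → κ) : ‖precompInfty 𝕜 E σ‖ ≤ 1 :=
  LinearMap.mkContinuous_norm_le _ zero_le_one _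

end Precomp

theorem exists_unit_infty_of_le_norm {ι 𝕜 : Type*} [NormedDivisionRing 𝕜]
    (f : lp (fun _ : ι => 𝕜) ∞) {m : ℝ} (hm : 0 < m) (hf : ∀ i, m ≤ ‖f i‖) :
    ∃ u : (lp (fun _ : ι => 𝕜) ∞)ˣ, (u : lp (fun _ : ι => 𝕜) ∞) = f ∧
      ‖(↑u⁻¹ : lp (fun _ : ι => 𝕜) ∞)‖ ≤ m⁻¹ := by
  have hf0 i : f i ≠ 0 := norm_pos_iff.1 (hm.trans_le (hf i))
  have hinv i : ‖(f i)⁻¹‖ ≤ m⁻¹ := by rw [norm_inv]; exact inv_anti₀ hm (hf i)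
  let g : lp (fun _ : ι => 𝕜) ∞ :=
    ⟨fun i => (f i)⁻¹, memℓp_infty ⟨m⁻¹, by rintro _ ⟨i, rfl⟩; exact hinv i⟩⟩
  refine ⟨⟨f, g, ?_, ?_⟩, rfl, norm_le_of_forall_le (inv_nonneg.2 hm.le) hinv⟩
  · ext i; exact mul_inv_cancel₀ (hf0 i)
  · ext i; exact inv_mul_cancel₀ (hf0 i)

theorem norm_sq_le_one_add {ι : Type*} (f : lp (fun _ : ι => ℝ) ∞) {δ : ℝ} (hδ : 0 ≤ δ)
    (h : ∀ i, |f i ^ 2 - 1| ≤ δ) : ‖f‖ ^ 2 ≤ 1 + δ := by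
  have hnorm : ‖f‖ ≤ √(1 + δ) := norm_le_of_forall_le (Real.sqrt_nonneg _) fun i => by
    rw [Real.norm_eq_abs, ← Real.sqrt_sq_eq_abs]
    exact Real.sqrt_le_sqrt (by linarith [(abs_le.1 (h i)).2])
  exact (Real.le_sqrt (norm_nonneg f) (by linarith)).1 hnorm

end lp

@[simps]
def Units.mulLeftCLM (𝕜 : Type*) {A : Type*} [NontriviallyNormedField 𝕜] [NormedRing A]
    [NormedAlgebra 𝕜 A] (u : Aˣ) : (A →L[𝕜] A)ˣ where
  val := ContinuousLinearMap.mul 𝕜 A u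
  inv := ContinuousLinearMap.mul 𝕜 A ↑u⁻¹
  val_inv := by ext; simp [← mul_assoc]
  inv_val := by ext; simp [← mul_assoc]

theorem Units.isUnit_add_of_norm_lt {R : Type*} [NormedRing R] [HasSummableGeomSeries R]
    (x : Rˣ) {t : R} {m : ℝ} (hx : ‖(↑x⁻¹ : R)‖ ≤ m⁻¹) (ht : ‖t‖ < m) : IsUnit ((x : R) + t) := by
  nontriviality R
  have hm : 0 < m := (norm_nonneg t).trans_lt ht
  exact (x.add t (ht.trans_le ((le_inv_comm₀ hm (Units.norm_pos _)).2 hx))).isUnit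

theorem Real.sqrt_one_sub_le_abs {x δ : ℝ} (h : |x ^ 2 - 1| ≤ δ) : √(1 - δ) ≤ |x| := by
  rw [← Real.sqrt_sq_eq_abs]
  exact Real.sqrt_le_sqrt (by linarith [neg_abs_le (x ^ 2 - 1)])

theorem sq_add_four_mul_lt_four {c M : ℝ} (hc : 0 ≤ c) (hM : M ^ 2 ≤ 1 + c * M)
    (hcb : c < 2 * √(1 - 2 / √5)) : c ^ 2 + 4 * c * M < 4 := by
  have hu : √5 ^ 2 = 5 := Real.sq_sqrt (by norm_num)
  have hu3 : √5 < 3 := by nlinarith [Real.sqrt_nonneg 5]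
  have hu0 : 0 < √5 := by positivity
  have hc2 : √5 * c ^ 2 < 4 * √5 - 8 := by
    have h := (Real.lt_sqrt (by positivity)).1 (show c / 2 < √(1 - 2 / √5) by linarith)
    have h2 : 2 / √5 * √5 = 2 := div_mul_cancel₀ _ hu0.ne'
    nlinarith
  -- `5 x ^ 2 - 40 x + 16 = (√5 x - 4 √5 + 8) (√5 x - 4 √5 - 8)`
  have hquartic : 0 < 5 * c ^ 4 - 40 * c ^ 2 + 16 := by
    nlinarith [mul_pos_of_neg_of_neg (show √5 * c ^ 2 - 4 * √5 + 8 < 0 by linarith)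
      (show √5 * c ^ 2 - 4 * √5 - 8 < 0 by linarith)]
  have h3c : 3 * c ^ 2 < 4 := by nlinarith
  -- `16 c² (M² - c M - 1) = (4 c M - 4 + c²) (4 c M + 4 - 5 c²) + (5 c⁴ - 40 c² + 16)`
  by_contra! h
  nlinarith [mul_nonneg (sub_nonneg.2 h) (show 0 ≤ 4 * c * M + 4 - 5 * c ^ 2 by linarith),
    mul_nonneg (sq_nonneg c) (sub_nonneg.2 hM)]

def henonCoupling (b ε : ℝ) : lp (fun _ : ℤ => ℝ) ∞ →L[ℝ] lp (fun _ : ℤ => ℝ) ∞ :=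
  ε • (lp.precompInfty ℝ ℝ (· + 1) + b • lp.precompInfty ℝ ℝ (· - 1))

theorem henonCoupling_apply (b ε : ℝ) (v : lp (fun _ : ℤ => ℝ) ∞) (t : ℤ) :
    henonCoupling b ε v t = ε * (v (t + 1) + b * v (t - 1)) := rfl

theorem norm_henonCoupling_le (b ε : ℝ) : ‖henonCoupling b ε‖ ≤ |ε| * (1 + |b|) := by
  rw [henonCoupling, norm_smul, Real.norm_eq_abs]
  gcongr
  calc _ ≤ ‖lp.precompInfty ℝ ℝ (· + 1 : ℤ → ℤ)‖ + |b| * ‖lp.precompInfty ℝ ℝ (· - 1 : ℤ → ℤ)‖ := by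
        rw [← Real.norm_eq_abs, ← norm_smul]
        exact norm_add_le _ _
    _ ≤ 1 + |b| * 1 := by gcongr <;> exact lp.norm_precompInfty_le _
    _ = 1 + |b| := by ring

end

theorem henon_linearization_invertible_general (b ε : ℝ)
    (hparam : |ε| * (1 + |b|) < 2 * Real.sqrt (1 - 2 / Real.sqrt 5))
    (z : ℤ → ℝ) (hbdd : ∃ M : ℝ, ∀ t : ℤ, |z t| ≤ M)
    (horbit : ∀ t : ℤ, ε * (z (t + 1) + b * z (t - 1)) + 1 - (z t) ^ 2 = 0) :
    ∃ L : lp (fun _ : ℤ => ℝ) ⊤ ≃L[ℝ] lp (fun _ : ℤ => ℝ) ⊤,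
      ∀ (v : lp (fun _ : ℤ => ℝ) ⊤) (t : ℤ),
        (L v : ℤ → ℝ) t = ε * (v : ℤ → ℝ) (t + 1) + ε * b * (v : ℤ → ℝ) (t - 1)
          - 2 * z t * (v : ℤ → ℝ) t := by
  set c := |ε| * (1 + |b|)
  obtain ⟨M, hM⟩ := hbdd
  let zℓ : lp (fun _ : ℤ => ℝ) ∞ := ⟨z, memℓp_infty ⟨M, by rintro _ ⟨t, rfl⟩; exact hM t⟩⟩
  have hdev t : |z t ^ 2 - 1| ≤ c * ‖zℓ‖ := by
    have hK : z t ^ 2 - 1 = henonCoupling b ε zℓ t := by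
      rw [henonCoupling_apply]; linarith [horbit t]
    rw [hK, ← Real.norm_eq_abs]
    exact (lp.norm_apply_le_norm ENNReal.top_ne_zero _ t).trans
      ((henonCoupling b ε).le_of_opNorm_le (norm_henonCoupling_le b ε) zℓ)
  have hgap : c / 2 < √(1 - c * ‖zℓ‖) := by
    have := sq_add_four_mul_lt_four (by positivity)
      (lp.norm_sq_le_one_add zℓ (by positivity) hdev) hparam
    exact (Real.lt_sqrt (by positivity)).2 (by linarith)
  obtain ⟨u, hu, hu_inv⟩ := lp.exists_unit_infty_of_le_norm ((-2 : ℝ) • zℓ)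
    (m := 2 * √(1 - c * ‖zℓ‖)) (by linarith [show 0 ≤ c by positivity]) fun t => by
      rw [lp.coeFn_smul, Pi.smul_apply, norm_smul]
      norm_num
      exact Real.sqrt_one_sub_le_abs (hdev t)
  obtain ⟨L, hL⟩ := (Units.mulLeftCLM ℝ u).isUnit_add_of_norm_lt
    ((ContinuousLinearMap.opNorm_mul_apply_le ℝ _ _).trans hu_inv)
    ((norm_henonCoupling_le b ε).trans_lt (by linarith))
  refine ⟨ContinuousLinearEquiv.unitsEquiv ℝ _ L, fun v t => ?_⟩
  rw [ContinuousLinearEquiv.unitsEquiv_apply, hL]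
  simp only [add_apply, Units.val_mulLeftCLM, ContinuousLinearMap.mul_apply',
    hu, lp.coeFn_add, Pi.add_apply, lp.infty_coeFn_mul, Pi.mul_apply, lp.coeFn_smul, Pi.smul_apply,
    smul_eq_mul, henonCoupling_apply]
  change -2 * z t * v t + _ = _
  ring

/-- **Bounded invertibility of the linearization at a Hénon orbit.**
Under the anti-integrable parameter bound, the linearization
`(Lv)_t = ε v_{t+1} + ε b v_{t−1} − 2 z_t v_t` of the Hénon recurrence at the
orbit `z` with symbol sequence `s` is a boundedly invertible operator on
`ℓ^∞(ℤ, ℝ)`; i.e. there is a continuous linear equivalence with this formula. -/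
theorem henon_linearization_invertible (b ε : ℝ)
    (hparam : |ε| * (1 + |b|) < 2 * Real.sqrt (1 - 2 / Real.sqrt 5))
    (s : ℤ → ℝ) (hs : ∀ t : ℤ, s t = -1 ∨ s t = 1)
    (z : ℤ → ℝ) (hbdd : ∃ M : ℝ, ∀ t : ℤ, |z t| ≤ M)
    (hsz : ∀ t : ℤ, s t * z t > 0)
    (horbit : ∀ t : ℤ, ε * (z (t + 1) + b * z (t - 1)) + 1 - (z t) ^ 2 = 0) :
    ∃ L : lp (fun _ : ℤ => ℝ) ⊤ ≃L[ℝ] lp (fun _ : ℤ => ℝ) ⊤,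
      ∀ (v : lp (fun _ : ℤ => ℝ) ⊤) (t : ℤ),
        (L v : ℤ → ℝ) t = ε * (v : ℤ → ℝ) (t + 1) + ε * b * (v : ℤ → ℝ) (t - 1)
          - 2 * z t * (v : ℤ → ℝ) t :=
  henon_linearization_invertible_general b ε hparam z hbdd horbit
end

section
/- Let 0 ≤ b < 1 and 0 ≤ ε < ε_max, where ε_max = (2/(1+b))·√((−b² + 2b + 5 − 2√(5+4b))/((1−b)(5−b))). Then for every symbol sequence s : ℤ → {−1,+1} such that there is no t ∈ ℤ with s_{t−1} = −1 and s_{t+1} = −1, there exists exactly one bounded sequence z : ℤ → ℝ with s_t · z_t > 0 for all t satisfying ε(z_{t+1} + b z_{t−1}) + 1 − z_t² = 0 for all t ∈ ℤ. -/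
/-!
Bounded orbits with itinerary `s` are the fixed points of
`z ↦ (t ↦ s_t √(1 + ε (z_{t+1} + b z_{t-1})))` in a band `m ≤ s_t z_t ≤ M`. Take `M` the larger
root of `M² = 1 + ε(1+b)M` and `m` the larger root of `m² = 1 + ε(bm - M)`. Since one neighbour
of every site carries the symbol `+`, the band is invariant, and since `√` has slope at most
`1/(2m)` above `m²`, the map contracts the sup distance by `ε(1+b)/(2m)`; the condition
`ε < ε_max` is exactly `ε(1+b) < 2m`. Banach's fixed point theorem gives a unique orbit in the
band, and comparing the supremum and infimum of `|z_t|` with `M` and `m` shows that every bounded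
orbit lies in the band.
-/

open Set BoundedContinuousFunction

lemma sq_sub_mul_lt_sq_sub_mul {x y c : ℝ} (hxy : x < y) (hc : c < x + y) :
    x ^ 2 - c * x < y ^ 2 - c * y := by
  nlinarith

lemma abs_sqrt_sub_sqrt_le {x y m : ℝ} (hm : 0 < m) (hx : m ^ 2 ≤ x) (hy : m ^ 2 ≤ y) :
    |√x - √y| ≤ |x - y| / (2 * m) := by
  have hsx : m ≤ √x := Real.le_sqrt_of_sq_le hx
  have hsy : m ≤ √y := Real.le_sqrt_of_sq_le hy
  have hxy : x - y = (√x - √y) * (√x + √y) := by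
    linear_combination Real.sq_sqrt ((sq_nonneg m).trans hy) - Real.sq_sqrt ((sq_nonneg m).trans hx)
  rw [le_div_iff₀ (by positivity), hxy, abs_mul, abs_of_pos (by linarith : 0 < √x + √y)]
  exact mul_le_mul_of_nonneg_left (by linarith) (abs_nonneg _)

lemma ciSup_sq_le {ι : Type*} [Nonempty ι] {f : ι → ℝ} {a : ℝ} (hf : BddAbove (range f))
    (h0 : ∀ i, 0 ≤ f i) (h : ∀ i, f i ^ 2 ≤ a) : (⨆ i, f i) ^ 2 ≤ a := by
  have ha : 0 ≤ a := (sq_nonneg _).trans (h (Classical.arbitrary ι))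
  rw [← Real.le_sqrt ((h0 _).trans (le_ciSup hf (Classical.arbitrary ι))) ha]
  exact ciSup_le fun i => Real.le_sqrt_of_sq_le (h i)

lemma le_ciInf_sq {ι : Type*} [Nonempty ι] {f : ι → ℝ} {a : ℝ}
    (h0 : ∀ i, 0 ≤ f i) (h : ∀ i, a ≤ f i ^ 2) : a ≤ (⨅ i, f i) ^ 2 := by
  refine (Real.sqrt_le_iff.1 (le_ciInf fun i => ?_)).2
  rw [← abs_of_nonneg (h0 i), ← Real.sqrt_sq_eq_abs]
  exact Real.sqrt_le_sqrt (h i)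

theorem existsUnique_fixedPoint_of_sup_contraction {ι : Type*} {S : Set (ι → ℝ)}
    (hS : IsClosed S) (hne : S.Nonempty) {C : ℝ} (hC : ∀ z ∈ S, ∀ i, |z i| ≤ C)
    {F : (ι → ℝ) → ι → ℝ} (hF : MapsTo F S S) {k : ℝ} (hk0 : 0 ≤ k) (hk1 : k < 1)
    (hFk : ∀ z ∈ S, ∀ w ∈ S, ∀ d, (∀ i, |z i - w i| ≤ d) → ∀ i, |F z i - F w i| ≤ k * d) :
    ∃! z, z ∈ S ∧ F z = z := by
  let : TopologicalSpace ι := ⊥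
  have : DiscreteTopology ι := ⟨rfl⟩
  let lift : S → ι →ᵇ ℝ := fun z =>
    ofNormedAddCommGroupDiscrete z C (hC z z.2)
  let B : Set (ι →ᵇ ℝ) := (fun f i => f i) ⁻¹' S
  have : CompleteSpace B :=
    (hS.preimage continuous_coe).isComplete.completeSpace_coe
  have : Nonempty B := ⟨⟨lift ⟨hne.some, hne.some_mem⟩, hne.some_mem⟩⟩
  let T : B → B := fun f => ⟨lift ⟨F f, hF f.2⟩, hF f.2⟩
  have hT : ContractingWith k.toNNReal T := by
    refine ⟨Real.toNNReal_lt_one.2 hk1, LipschitzWith.of_dist_le_mul fun f g => ?_⟩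
    rw [Subtype.dist_eq, Subtype.dist_eq, Real.coe_toNNReal k hk0,
      dist_le (mul_nonneg hk0 dist_nonneg)]
    exact hFk _ f.2 _ g.2 _ (fun i => (Real.dist_eq _ _).symm.trans_le (dist_coe_le_dist i))
  refine ⟨⇑(ContractingWith.fixedPoint T hT).1, ⟨(ContractingWith.fixedPoint T hT).2,
    congrArg (fun f : B => ⇑f.1) hT.fixedPoint_isFixedPt⟩, ?_⟩
  rintro w ⟨hw, hFw⟩
  have hTw : Function.IsFixedPt T ⟨lift ⟨w, hw⟩, hw⟩ :=
    Subtype.ext (ext fun i => congrFun hFw i)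
  exact congrArg (fun f : B => ⇑f.1) (hT.fixedPoint_unique hTw)

structure HenonBandRadii (b ε m M : ℝ) : Prop where
  b_nonneg : 0 ≤ b
  b_le_one : b ≤ 1
  eps_nonneg : 0 ≤ ε
  pos : 0 < m
  le_one : m ≤ 1
  one_le : 1 ≤ M
  outer : 1 + ε * (1 + b) * M ≤ M ^ 2
  inner : m ^ 2 ≤ 1 + ε * (b * m - M)
  contract : ε * (1 + b) < 2 * m

lemma HenonBandRadii.contraction_mem_Ico {b ε m M : ℝ} (h : HenonBandRadii b ε m M) :
    ε * (1 + b) / (2 * m) ∈ Ico 0 1 :=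
  ⟨div_nonneg (mul_nonneg h.eps_nonneg (by linarith [h.b_nonneg])) (by linarith [h.pos]),
    (div_lt_one (by linarith [h.pos])).2 h.contract⟩

lemma henon_threshold_bound {b x : ℝ} (hb0 : 0 ≤ b) (hb1 : b < 1) (hx0 : 0 ≤ x)
    (hx : x < √((-b ^ 2 + 2 * b + 5 - 2 * √(5 + 4 * b)) / ((1 - b) * (5 - b)))) :
    x ^ 2 * (3 - b) + 2 * x * √(x ^ 2 + 1) < 1 + b := by
  set r := √(5 + 4 * b)
  have hr : r ^ 2 = 5 + 4 * b := Real.sq_sqrt (by linarith)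
  have hr0 : 0 ≤ r := Real.sqrt_nonneg _
  have hP : 0 < (1 - b) * (5 - b) := by nlinarith
  have hu : x ^ 2 * ((1 - b) * (5 - b)) < -b ^ 2 + 2 * b + 5 - 2 * r :=
    (lt_div_iff₀ hP).1 ((Real.lt_sqrt hx0).1 hx)
  -- `r² (3 - b)² - (5 + b)² = 4 (1 + b)(1 - b)(5 - b)`
  have hr3 : 5 + b ≤ r * (3 - b) := by nlinarith
  have hpos : 0 < 1 + b - x ^ 2 * (3 - b) := by nlinarith
  -- With `u = x²`, `A = 5 + 2b - b²` and `P = (1 - b)(5 - b)`, the hypothesis says that `u` lies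
  -- below the smaller root `(A - 2r)/P` of `P u² - 2A u + (1 + b)²` (as `A² - 4r² = P(1 + b)²`),
  -- where this quadratic, and with it `hsq`, is positive.
  have hquad : 0 < (-b ^ 2 + 2 * b + 5 - x ^ 2 * ((1 - b) * (5 - b))) ^ 2 - (2 * r) ^ 2 := by
    nlinarith
  have hsq : (2 * x * √(x ^ 2 + 1)) ^ 2 < (1 + b - x ^ 2 * (3 - b)) ^ 2 := by
    rw [mul_pow, Real.sq_sqrt (by positivity)]
    nlinarith
  linarith [lt_of_pow_lt_pow_left₀ 2 hpos.le hsq]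

lemma exists_henonBandRadii {b ε : ℝ} (hb0 : 0 ≤ b) (hb1 : b < 1) (hε0 : 0 ≤ ε)
    (hε : ε < (2 / (1 + b)) *
      √((-b ^ 2 + 2 * b + 5 - 2 * √(5 + 4 * b)) / ((1 - b) * (5 - b)))) :
    ∃ m M, HenonBandRadii b ε m M := by
  rw [div_mul_eq_mul_div, lt_div_iff₀ (by linarith)] at hε
  set x := ε * (1 + b) / 2 with hx_def
  have hx := henon_threshold_bound hb0 hb1 (by positivity) (x := x) (by linarith)
  set M := x + √(x ^ 2 + 1) with hM_def
  have hT := Real.sq_sqrt (by positivity : 0 ≤ x ^ 2 + 1)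
  have hM1 : 1 ≤ M := by nlinarith [Real.sqrt_nonneg (x ^ 2 + 1)]
  have hMq : M ^ 2 = 1 + ε * (1 + b) * M := by linear_combination hT
  have hD : ε ^ 2 * (1 - b ^ 2) < 4 * (1 - ε * M) := by
    have : (1 + b) * (ε ^ 2 * (1 - b ^ 2) + 4 * ε * M) =
        4 * (x ^ 2 * (3 - b) + 2 * x * √(x ^ 2 + 1)) := by
      rw [hM_def, hx_def]; ring
    nlinarith
  set m := (ε * b + √(ε ^ 2 * b ^ 2 + 4 * (1 - ε * M))) / 2 with hm_def
  have hD' := Real.sq_sqrt (by nlinarith : 0 ≤ ε ^ 2 * b ^ 2 + 4 * (1 - ε * M))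
  have hmq : m ^ 2 = 1 + ε * (b * m - M) := by linear_combination hD' / 4
  have hk : ε * (1 + b) < 2 * m := by
    have : ε < √(ε ^ 2 * b ^ 2 + 4 * (1 - ε * M)) := (Real.lt_sqrt hε0).2 (by nlinarith)
    linarith
  refine ⟨m, M, hb0, hb1.le, hε0, by nlinarith, ?_, hM1, hMq.ge, hmq.le, hk⟩
  by_contra! h
  have := sq_sub_mul_lt_sq_sub_mul h (c := ε * b) (by nlinarith)
  nlinarith

def IsSignSeq (s : ℤ → ℝ) : Prop := ∀ t, s t = -1 ∨ s t = 1

lemma IsSignSeq.mul_self {s : ℤ → ℝ} (hs : IsSignSeq s) (t : ℤ) : s t * s t = 1 := by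
  rcases hs t with h | h <;> simp [h]

lemma IsSignSeq.abs_eq_one {s : ℤ → ℝ} (hs : IsSignSeq s) (t : ℤ) : |s t| = 1 := by
  rcases hs t with h | h <;> simp [h]

lemma IsSignSeq.abs_eq_mul {s z : ℤ → ℝ} (hs : IsSignSeq s) {t : ℤ} (h : 0 ≤ s t * z t) :
    |z t| = s t * z t := by
  rw [← abs_of_nonneg h, abs_mul, hs.abs_eq_one, one_mul]

noncomputable def henonStep (b ε : ℝ) (s z : ℤ → ℝ) : ℤ → ℝ :=
  fun t => s t * √(1 + ε * (z (t + 1) + b * z (t - 1)))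

def henonBand (m M : ℝ) (s : ℤ → ℝ) : Set (ℤ → ℝ) :=
  {z | ∀ t, s t * z t ∈ Icc m M}

section HenonStep

variable {b ε m M : ℝ} {s z w : ℤ → ℝ}

lemma isClosed_henonBand : IsClosed (henonBand m M s) := by
  simp only [henonBand, ofPred_forall]
  exact isClosed_iInter fun t => isClosed_Icc.preimage (continuous_const.mul (continuous_apply t))

lemma sign_mem_henonBand (hs : IsSignSeq s) (hm : m ≤ 1) (hM : 1 ≤ M) :
    s ∈ henonBand m M s := fun t => by
  rw [hs.mul_self]; exact ⟨hm, hM⟩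

lemma abs_le_of_mem_henonBand (hs : IsSignSeq s) (hm : 0 ≤ m)
    (hz : z ∈ henonBand m M s) (t : ℤ) : |z t| ≤ M := by
  rw [hs.abs_eq_mul (hm.trans (hz t).1)]; exact (hz t).2

lemma henon_arg_le (hb : 0 ≤ b) (hε : 0 ≤ ε) {R : ℝ} (hR : ∀ t, |z t| ≤ R) (t : ℤ) :
    1 + ε * (z (t + 1) + b * z (t - 1)) ≤ 1 + ε * (1 + b) * R := by
  have h₁ := (abs_le.1 (hR (t + 1))).2
  have h₂ := mul_le_mul_of_nonneg_left (abs_le.1 (hR (t - 1))).2 hb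
  nlinarith

lemma le_henon_arg (hb0 : 0 ≤ b) (hb1 : b ≤ 1) (hε : 0 ≤ ε) (hs : IsSignSeq s)
    (hF : ∀ t, s (t - 1) = 1 ∨ s (t + 1) = 1) {r R : ℝ} (hr : 0 ≤ r)
    (hzr : ∀ t, r ≤ s t * z t) (hzR : ∀ t, |z t| ≤ R) (t : ℤ) :
    1 + ε * (b * r - R) ≤ 1 + ε * (z (t + 1) + b * z (t - 1)) := by
  have hrR : r ≤ R := (hs.abs_eq_mul (hr.trans (hzr t)) ▸ hzr t).trans (hzR t)
  refine add_le_add_right (mul_le_mul_of_nonneg_left ?_ hε) 1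
  rcases hF t with h | h
  · have h₁ := (abs_le.1 (hzR (t + 1))).1
    have h₂ : r ≤ z (t - 1) := by simpa [h] using hzr (t - 1)
    nlinarith
  · have h₁ : r ≤ z (t + 1) := by simpa [h] using hzr (t + 1)
    have h₂ := (abs_le.1 (hzR (t - 1))).1
    nlinarith

lemma henon_arg_mem_Icc (hs : IsSignSeq s)
    (hF : ∀ t, s (t - 1) = 1 ∨ s (t + 1) = 1) (h : HenonBandRadii b ε m M)
    (hz : z ∈ henonBand m M s) (t : ℤ) :
    1 + ε * (z (t + 1) + b * z (t - 1)) ∈ Icc (m ^ 2) (M ^ 2) := by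
  have hzM := abs_le_of_mem_henonBand hs h.pos.le hz
  exact ⟨h.inner.trans (le_henon_arg h.b_nonneg h.b_le_one h.eps_nonneg hs hF h.pos.le
      (fun t => (hz t).1) hzM t),
    (henon_arg_le h.b_nonneg h.eps_nonneg hzM t).trans h.outer⟩

lemma henonStep_mapsTo (hs : IsSignSeq s)
    (hF : ∀ t, s (t - 1) = 1 ∨ s (t + 1) = 1) (h : HenonBandRadii b ε m M) :
    MapsTo (henonStep b ε s) (henonBand m M s) (henonBand m M s) := fun z hz t => by
  obtain ⟨hm, hM⟩ := henon_arg_mem_Icc hs hF h hz t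
  rw [henonStep, ← mul_assoc, hs.mul_self, one_mul]
  exact ⟨Real.le_sqrt_of_sq_le hm, Real.sqrt_le_iff.2 ⟨by linarith [h.one_le], hM⟩⟩

lemma abs_henonStep_sub_le (hs : IsSignSeq s)
    (hF : ∀ t, s (t - 1) = 1 ∨ s (t + 1) = 1) (h : HenonBandRadii b ε m M)
    (hz : z ∈ henonBand m M s) (hw : w ∈ henonBand m M s) {d : ℝ}
    (hd : ∀ t, |z t - w t| ≤ d) (t : ℤ) :
    |henonStep b ε s z t - henonStep b ε s w t| ≤ ε * (1 + b) / (2 * m) * d := by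
  rw [henonStep, henonStep, ← mul_sub, abs_mul, hs.abs_eq_one, one_mul]
  refine (abs_sqrt_sub_sqrt_le h.pos (henon_arg_mem_Icc hs hF h hz t).1
    (henon_arg_mem_Icc hs hF h hw t).1).trans ?_
  rw [div_mul_eq_mul_div]
  refine div_le_div_of_nonneg_right ?_ (by linarith [h.pos])
  have h₁ := abs_le.1 (hd (t + 1))
  have h₂ := abs_le.1 (hd (t - 1))
  rw [abs_le]
  constructor <;> nlinarith [h.eps_nonneg, mul_nonneg h.eps_nonneg h.b_nonneg]

lemma henon_recurrence_of_isFixedPt (hs : IsSignSeq s)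
    (hF : ∀ t, s (t - 1) = 1 ∨ s (t + 1) = 1) (h : HenonBandRadii b ε m M)
    (hz : z ∈ henonBand m M s) (hfix : henonStep b ε s z = z) (t : ℤ) :
    ε * (z (t + 1) + b * z (t - 1)) + 1 - z t ^ 2 = 0 := by
  have harg := (sq_nonneg m).trans (henon_arg_mem_Icc hs hF h hz t).1
  rw [← congrFun hfix t, henonStep, mul_pow, sq (s t), hs.mul_self, one_mul, Real.sq_sqrt harg]
  ring

lemma henonStep_eq_self_of_recurrence (hs : IsSignSeq s) (hpos : ∀ t, 0 < s t * z t)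
    (hrec : ∀ t, ε * (z (t + 1) + b * z (t - 1)) + 1 - z t ^ 2 = 0) :
    henonStep b ε s z = z := by
  funext t
  rw [henonStep, show 1 + ε * (z (t + 1) + b * z (t - 1)) = z t ^ 2 by linarith [hrec t],
    Real.sqrt_sq_eq_abs, hs.abs_eq_mul (hpos t).le, ← mul_assoc, hs.mul_self, one_mul]

lemma mem_henonBand_of_recurrence (hs : IsSignSeq s)
    (hF : ∀ t, s (t - 1) = 1 ∨ s (t + 1) = 1) (h : HenonBandRadii b ε m M)
    {R : ℝ} (hR : ∀ t, |z t| ≤ R) (hpos : ∀ t, 0 < s t * z t)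
    (hrec : ∀ t, ε * (z (t + 1) + b * z (t - 1)) + 1 - z t ^ 2 = 0) :
    z ∈ henonBand m M s := by
  have hsq : ∀ t, |z t| ^ 2 = 1 + ε * (z (t + 1) + b * z (t - 1)) := fun t => by
    rw [sq_abs]; linarith [hrec t]
  have habs : ∀ t, |z t| = s t * z t := fun t => hs.abs_eq_mul (hpos t).le
  have hbdd : BddAbove (range fun t => |z t|) := ⟨R, forall_mem_range.2 hR⟩
  set zsup := ⨆ t, |z t|
  set zinf := ⨅ t, |z t|
  have hle_sup : ∀ t, |z t| ≤ zsup := le_ciSup hbdd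
  have hinf_le : ∀ t, zinf ≤ |z t| := ciInf_le ⟨0, forall_mem_range.2 fun t => abs_nonneg _⟩
  have hinf0 : 0 ≤ zinf := le_ciInf fun t => abs_nonneg _
  have hsup : zsup ≤ M := by
    have := ciSup_sq_le hbdd (fun t => abs_nonneg _)
      fun t => (hsq t).trans_le (henon_arg_le h.b_nonneg h.eps_nonneg hle_sup t)
    by_contra! hlt
    have := sq_sub_mul_lt_sq_sub_mul hlt (c := ε * (1 + b))
      (by linarith [h.contract, h.le_one, h.one_le])
    linarith [h.outer]
  have hinf : m ≤ zinf := by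
    have := le_ciInf_sq (fun t => abs_nonneg (z t)) fun t => (hsq t).symm ▸
      le_henon_arg h.b_nonneg h.b_le_one h.eps_nonneg hs hF hinf0 (fun t => habs t ▸ hinf_le t)
        (fun t => (hle_sup t).trans hsup) t
    by_contra! hlt
    have := sq_sub_mul_lt_sq_sub_mul hlt (c := ε * b)
      (by nlinarith [h.contract, h.b_le_one, h.eps_nonneg])
    nlinarith [h.inner]
  exact fun t => habs t ▸ ⟨hinf.trans (hinf_le t), (hle_sup t).trans hsup⟩

end HenonStep

/-- **Existence and uniqueness of Hénon orbits for the subshift `Σ_F`.**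
For `0 ≤ b < 1` and `0 ≤ ε < ε_max`, every symbol sequence `s : ℤ → {−1,+1}`
avoiding the pattern `s_{t−1} = s_{t+1} = −1` continues to a unique bounded
orbit of the Hénon recurrence. -/
theorem henon_subshift_exists_unique (b ε : ℝ)
    (hb0 : 0 ≤ b) (hb1 : b < 1) (hε0 : 0 ≤ ε)
    (hε : ε < (2 / (1 + b)) *
      Real.sqrt ((-b ^ 2 + 2 * b + 5 - 2 * Real.sqrt (5 + 4 * b)) / ((1 - b) * (5 - b))))
    (s : ℤ → ℝ) (hs : ∀ t : ℤ, s t = -1 ∨ s t = 1)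
    (hF : ¬ ∃ t : ℤ, s (t - 1) = -1 ∧ s (t + 1) = -1) :
    ∃! z : ℤ → ℝ,
      (∃ M : ℝ, ∀ t : ℤ, |z t| ≤ M) ∧
      (∀ t : ℤ, s t * z t > 0) ∧
      (∀ t : ℤ, ε * (z (t + 1) + b * z (t - 1)) + 1 - (z t) ^ 2 = 0) := by
  obtain ⟨m, M, h⟩ := exists_henonBandRadii hb0 hb1 hε0 hε
  have hF' : ∀ t, s (t - 1) = 1 ∨ s (t + 1) = 1 := fun t =>
    (hs (t - 1)).elim (fun h₁ => .inr ((hs (t + 1)).resolve_left fun h₂ => hF ⟨t, h₁, h₂⟩)) .inl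
  obtain ⟨z, ⟨hz, hfix⟩, huniq⟩ := existsUnique_fixedPoint_of_sup_contraction
    isClosed_henonBand ⟨s, sign_mem_henonBand hs h.le_one h.one_le⟩
    (fun _ => abs_le_of_mem_henonBand hs h.pos.le) (henonStep_mapsTo hs hF' h)
    h.contraction_mem_Ico.1 h.contraction_mem_Ico.2
    fun z hz w hw _ hd => abs_henonStep_sub_le hs hF' h hz hw hd
  refine ⟨z, ⟨⟨M, abs_le_of_mem_henonBand hs h.pos.le hz⟩, fun t => h.pos.trans_le (hz t).1,
    henon_recurrence_of_isFixedPt hs hF' h hz hfix⟩, ?_⟩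
  rintro w ⟨⟨R, hR⟩, hpos, hrec⟩
  exact huniq w ⟨mem_henonBand_of_recurrence hs hF' h hR hpos hrec,
    henonStep_eq_self_of_recurrence hs hpos hrec⟩
end

section
/- Let x and y be distinct elements of H with cores c and c′ respectively. Then x and y are adjacent in the unimodal order if and only if there exists a finite binary string s such that {c, c′} = {s·(+), s·(−)} (the two strings obtained from s by appending a final + or a final −). -/
/-- Symbols: `true` stands for `+`, `false` stands for `−`.
The unimodal order on one-sided sequences: `a <_u b` iff they differ, and at the
first index `n` where they differ, `a n = −` exactly when the number of `−`
symbols among `a 0, …, a (n−1)` is even. -/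
def UnimodalLt (a b : ℕ → Bool) : Prop :=
  ∃ n : ℕ, (∀ m : ℕ, m < n → a m = b m) ∧ a n ≠ b n ∧
    (a n = false ↔ Even (((Finset.range n).filter (fun m => a m = false)).card))

/-- The homoclinic sequence with core `c`: the finite string `c`, followed by a
single `−`, followed by the constant sequence of `+`'s. -/
def homSeq (c : List Bool) : ℕ → Bool := fun n => (c ++ [false]).getD n true

/-- `H` is the set of all homoclinic sequences. -/
def homSet : Set (ℕ → Bool) := Set.range homSeq

/-- Two sequences are adjacent (neighbors) if they are distinct and no element
of `H` lies strictly between them in the unimodal order. -/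
def HomAdjacent (x y : ℕ → Bool) : Prop :=
  x ≠ y ∧ ¬ ∃ z ∈ homSet,
    (UnimodalLt x z ∧ UnimodalLt z y) ∨ (UnimodalLt y z ∧ UnimodalLt z x)

/-!
If `x ≠ y` first differ at `k`, then `x <_u y` iff `negCount x (k+1)`, the number of `−` among
`x 0, …, x k`, is odd. Consequently `homSeq d` is an extreme point of the cylinder of sequences
starting with `d`: it lies below all of them iff `d` has an even number of `−`. Comparing these
two parities shows that, for `y` first differing from `x` at `k`, the homoclinic sequence with
core `x 0 ⋯ x k` lies strictly between `x` and `y`, unless it is `x` itself. So adjacent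
`homSeq c` and `homSeq c'` must have cores `x 0 ⋯ x k` and `y 0 ⋯ y k`, i.e. `s+` and `s−`.
Conversely, the same parity count puts every sequence of the cylinder of `s±` other than
`homSeq (s±)` on the far side of `homSeq (s±)` from `homSeq (s∓)`.
-/

open PiNat

def negCount (a : ℕ → Bool) (n : ℕ) : ℕ :=
  ((Finset.range n).filter (fun m => a m = false)).card

lemma negCount_succ (a : ℕ → Bool) (n : ℕ) :
    negCount a (n + 1) = negCount a n + if a n = false then 1 else 0 := by
  simp only [negCount, Finset.range_add_one, Finset.filter_insert]
  split
  · rw [Finset.card_insert_of_notMem (by simp)]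
  · simp

lemma negCount_congr {a b : ℕ → Bool} {n : ℕ} (h : b ∈ cylinder a n) :
    negCount b n = negCount a n := by
  unfold negCount
  congr 1
  exact Finset.filter_congr fun m hm => by rw [h m (Finset.mem_range.mp hm)]

lemma firstDiff_eq_of_mem_cylinder {E : ℕ → Type*} {x y : ∀ n, E n} {n : ℕ}
    (h : x ∈ cylinder y n) (hn : x n ≠ y n) : firstDiff x y = n := by
  have hxy : x ≠ y := fun e => hn (by rw [e])
  refine le_antisymm ?_ ((mem_cylinder_iff_le_firstDiff hxy n).1 h)
  by_contra! hlt
  exact hn (apply_eq_of_lt_firstDiff hlt)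

lemma mem_cylinder_succ {E : ℕ → Type*} {x y : ∀ n, E n} {n : ℕ} (h : y ∈ cylinder x n)
    (hn : y n = x n) : y ∈ cylinder x (n + 1) :=
  fun m hm => (Nat.lt_succ_iff_lt_or_eq.1 hm).elim (h m) fun e => e ▸ hn

section UnimodalOrder

variable {x y z : ℕ → Bool}

lemma UnimodalLt.ne (h : UnimodalLt x y) : x ≠ y := by
  rintro rfl
  obtain ⟨n, -, hn, -⟩ := h
  exact hn rfl

lemma unimodalLt_iff_odd (h : x ≠ y) :
    UnimodalLt x y ↔ Odd (negCount x (firstDiff x y + 1)) := by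
  have parity : ∀ k, (x k = false ↔ Even (negCount x k)) ↔ Odd (negCount x (k + 1)) := by
    intro k
    rw [negCount_succ]
    cases x k <;> simp [Nat.odd_add_one]
  rw [← parity]
  constructor
  · rintro ⟨n, hlt, hne, hn⟩
    obtain rfl : n = firstDiff x y :=
      le_antisymm (not_lt.1 fun hk => apply_firstDiff_ne h (hlt _ hk))
        (not_lt.1 fun hk => hne (apply_eq_of_lt_firstDiff hk))
    exact hn
  · exact fun hk => ⟨_, fun m hm => apply_eq_of_lt_firstDiff hm, apply_firstDiff_ne h, hk⟩

lemma unimodalLt_comm_iff_not (h : x ≠ y) : UnimodalLt y x ↔ ¬ UnimodalLt x y := by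
  rw [unimodalLt_iff_odd h, unimodalLt_iff_odd h.symm, firstDiff_comm, negCount_succ,
    negCount_succ, negCount_congr (mem_cylinder_firstDiff x y)]
  have hne := apply_firstDiff_ne h
  cases hx : x (firstDiff x y) <;> cases hy : y (firstDiff x y) <;>
    simp_all [Nat.odd_add_one]

lemma unimodalLt_iff_of_mem_cylinder (hxy : x ≠ y) (hz : z ∈ cylinder x (firstDiff x y + 1)) :
    (UnimodalLt z y ↔ UnimodalLt x y) ∧ (UnimodalLt y z ↔ UnimodalLt y x) := by
  have hk : z (firstDiff x y) ≠ y (firstDiff x y) := by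
    rw [hz _ (Nat.lt_succ_self _)]
    exact apply_firstDiff_ne hxy
  have hzk : firstDiff z y = firstDiff x y := by
    refine firstDiff_eq_of_mem_cylinder (fun m hm => ?_) hk
    rw [hz m (hm.trans (Nat.lt_succ_self _)), apply_eq_of_lt_firstDiff hm]
  have hzy : z ≠ y := fun e => hk (by rw [e])
  have hlt : UnimodalLt z y ↔ UnimodalLt x y := by
    rw [unimodalLt_iff_odd hzy, unimodalLt_iff_odd hxy, hzk, negCount_congr hz]
  exact ⟨hlt, by rw [unimodalLt_comm_iff_not hzy, unimodalLt_comm_iff_not hxy, hlt]⟩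

def UnimodalBetween (x z y : ℕ → Bool) : Prop :=
  (UnimodalLt x z ∧ UnimodalLt z y) ∨ (UnimodalLt y z ∧ UnimodalLt z x)

lemma UnimodalBetween.symm (h : UnimodalBetween x z y) : UnimodalBetween y z x :=
  Or.symm h

lemma UnimodalBetween.ne_left (h : UnimodalBetween x z y) : z ≠ x := by
  rcases h with ⟨h, -⟩ | ⟨-, h⟩
  exacts [h.ne.symm, h.ne]

lemma unimodalBetween_iff (hxy : x ≠ y) (hzx : z ≠ x)
    (hz : z ∈ cylinder x (firstDiff x y + 1)) :
    UnimodalBetween x z y ↔ (UnimodalLt z x ↔ UnimodalLt y x) := by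
  obtain ⟨hzy, hyz⟩ := unimodalLt_iff_of_mem_cylinder hxy hz
  rw [UnimodalBetween, hzy, hyz, unimodalLt_comm_iff_not hzx.symm,
    unimodalLt_comm_iff_not hxy.symm]
  tauto

lemma mem_cylinder_of_unimodalBetween {n : ℕ} (hy : y ∈ cylinder x n)
    (h : UnimodalBetween x z y) : z ∈ cylinder x n := by
  by_contra hz
  have hzx := h.ne_left
  have hlt : firstDiff x z + 1 ≤ n := by
    rw [firstDiff_comm]
    exact Nat.succ_le_of_lt
      (not_le.1 fun hle => hz ((mem_cylinder_iff_le_firstDiff hzx n).2 hle))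
  obtain ⟨hyz, hzy⟩ := unimodalLt_iff_of_mem_cylinder hzx.symm (cylinder_anti x hlt hy)
  have := unimodalLt_comm_iff_not hzx
  rcases h with ⟨h₁, h₂⟩ | ⟨h₁, h₂⟩
  · exact this.1 h₁ (hzy.1 h₂)
  · exact this.1 (hyz.1 h₁) h₂

end UnimodalOrder

def seqPrefix {α : Type*} (a : ℕ → α) (n : ℕ) : List α := (List.range n).map a

section SeqPrefix

variable {α : Type*} (a : ℕ → α) (n : ℕ)

@[simp]
lemma length_seqPrefix : (seqPrefix a n).length = n := by simp [seqPrefix]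

@[simp]
lemma getElem_seqPrefix {m : ℕ} (h : m < (seqPrefix a n).length) :
    (seqPrefix a n)[m] = a m := by
  simp [seqPrefix]

lemma seqPrefix_succ : seqPrefix a (n + 1) = seqPrefix a n ++ [a n] := by
  simp [seqPrefix, List.range_succ]

variable {a n} in
lemma seqPrefix_congr {b : ℕ → α} (h : b ∈ cylinder a n) : seqPrefix b n = seqPrefix a n :=
  List.ext_getElem (by simp) fun m hm _ => by simpa using h m (by simpa using hm)

lemma count_false_seqPrefix (a : ℕ → Bool) (n : ℕ) :
    (seqPrefix a n).count false = negCount a n := by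
  induction n with
  | zero => simp [seqPrefix, negCount]
  | succ n ih =>
    rw [seqPrefix_succ, List.count_append, ih, negCount_succ]
    cases a n <;> simp

end SeqPrefix

section Homoclinic

variable {c : List Bool} {m : ℕ}

lemma homSeq_of_lt {l : List Bool} (h : m < l.length) : homSeq l m = l[m] := by
  simp [homSeq, List.getD_eq_getElem?_getD, List.getElem?_append_left h, h]

lemma homSeq_length (c : List Bool) : homSeq c c.length = false := by
  simp [homSeq]

lemma homSeq_of_length_lt (h : c.length < m) : homSeq c m = true :=
  List.getD_eq_default _ _ (by simpa using h)

lemma seqPrefix_homSeq_length (c : List Bool) : seqPrefix (homSeq c) c.length = c :=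
  List.ext_getElem (by simp) fun m hm _ => by
    rw [getElem_seqPrefix, homSeq_of_lt (by simpa using hm)]

lemma homSeq_seqPrefix_mem_cylinder (a : ℕ → Bool) (n : ℕ) :
    homSeq (seqPrefix a n) ∈ cylinder a n := fun m hm => by
  rw [homSeq_of_lt (by simpa using hm), getElem_seqPrefix]

lemma homSeq_injective : Function.Injective homSeq := by
  have length_le : ∀ {c c' : List Bool}, homSeq c = homSeq c' → c'.length ≤ c.length :=
    fun {_ c'} h => not_lt.1 fun hlt => by
      have := congrFun h c'.length
      rw [homSeq_of_length_lt hlt, homSeq_length] at this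
      simp at this
  intro c c' h
  rw [← seqPrefix_homSeq_length c, ← seqPrefix_homSeq_length c', h,
    le_antisymm (length_le h) (length_le h.symm)]

lemma negCount_homSeq_of_length_lt (h : c.length < m) :
    negCount (homSeq c) m = c.count false + 1 := by
  induction m, h using Nat.le_induction with
  | base =>
    rw [negCount_succ, ← count_false_seqPrefix, seqPrefix_homSeq_length, homSeq_length]
    simp
  | succ m hm ih => rw [negCount_succ, ih, homSeq_of_length_lt hm]; simp

lemma homSeq_unimodalLt_iff {y : ℕ → Bool} (hy : y ∈ cylinder (homSeq c) c.length)
    (hne : homSeq c ≠ y) : UnimodalLt (homSeq c) y ↔ Even (c.count false) := by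
  have hk : c.length ≤ firstDiff (homSeq c) y := by
    rw [firstDiff_comm]
    exact (mem_cylinder_iff_le_firstDiff hne.symm _).1 hy
  rw [unimodalLt_iff_odd hne, negCount_homSeq_of_length_lt (Nat.lt_succ_of_le hk),
    Nat.odd_add_one, Nat.not_odd_iff_even]

lemma unimodalBetween_homSeq_seqPrefix {x y : ℕ → Bool} (hxy : x ≠ y)
    (hzx : homSeq (seqPrefix x (firstDiff x y + 1)) ≠ x) :
    UnimodalBetween x (homSeq (seqPrefix x (firstDiff x y + 1))) y := by
  set d := seqPrefix x (firstDiff x y + 1)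
  have hx : x ∈ cylinder (homSeq d) d.length := by
    rw [mem_cylinder_comm, length_seqPrefix]
    exact homSeq_seqPrefix_mem_cylinder x _
  rw [unimodalBetween_iff hxy hzx (homSeq_seqPrefix_mem_cylinder x _),
    homSeq_unimodalLt_iff hx hzx, unimodalLt_comm_iff_not hxy, unimodalLt_iff_odd hxy,
    count_false_seqPrefix, Nat.not_odd_iff_even]

lemma not_unimodalBetween_homSeq {y z : ℕ → Bool} (hxy : homSeq c ≠ y)
    (hc : c.length = firstDiff (homSeq c) y + 1) (hzx : z ≠ homSeq c)
    (hz : z ∈ cylinder (homSeq c) c.length) : ¬ UnimodalBetween (homSeq c) z y := by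
  rw [unimodalBetween_iff hxy hzx (hc ▸ hz), unimodalLt_comm_iff_not hzx.symm,
    unimodalLt_comm_iff_not hxy, homSeq_unimodalLt_iff hz hzx.symm, unimodalLt_iff_odd hxy,
    ← hc, ← count_false_seqPrefix, seqPrefix_homSeq_length, Nat.not_odd_iff_even]
  exact not_iff_self

end Homoclinic

lemma HomAdjacent.symm {x y : ℕ → Bool} (h : HomAdjacent x y) : HomAdjacent y x :=
  ⟨h.1.symm, fun ⟨z, hz, hb⟩ => h.2 ⟨z, hz, UnimodalBetween.symm hb⟩⟩

lemma eq_seqPrefix_of_homAdjacent {c : List Bool} {y : ℕ → Bool}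
    (h : HomAdjacent (homSeq c) y) :
    c = seqPrefix (homSeq c) (firstDiff (homSeq c) y + 1) := by
  by_contra hc
  exact h.2 ⟨_, ⟨_, rfl⟩,
    unimodalBetween_homSeq_seqPrefix h.1 fun e => hc (homSeq_injective e).symm⟩

lemma homAdjacent_append_singleton (s : List Bool) (a : Bool) :
    HomAdjacent (homSeq (s ++ [a])) (homSeq (s ++ [!a])) := by
  set x := homSeq (s ++ [a])
  set y := homSeq (s ++ [!a])
  have hxs : x s.length = a := by simp [x, homSeq]
  have hys : y s.length = !a := by simp [y, homSeq]
  have hyx : y ∈ cylinder x s.length := fun m hm => by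
    show homSeq _ m = homSeq _ m
    rw [homSeq_of_lt (by simp; omega), homSeq_of_lt (by simp; omega),
      List.getElem_append_left hm, List.getElem_append_left hm]
  have hfd : firstDiff x y = s.length :=
    firstDiff_eq_of_mem_cylinder ((mem_cylinder_comm _ _ _).1 hyx) (by simp [hxs, hys])
  have hxy : x ≠ y := homSeq_injective.ne (by simp)
  refine ⟨hxy, ?_⟩
  rintro ⟨z, -, hb : UnimodalBetween x z y⟩
  have hz := mem_cylinder_of_unimodalBetween hyx hb
  rcases Bool.eq_or_eq_not (z s.length) a with hza | hza
  · exact not_unimodalBetween_homSeq hxy (by simpa using hfd.symm) hb.ne_left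
      (by simpa using mem_cylinder_succ hz (hza.trans hxs.symm)) hb
  · rw [← mem_cylinder_iff_eq.1 hyx] at hz
    exact not_unimodalBetween_homSeq hxy.symm (by simpa [firstDiff_comm] using hfd.symm)
      hb.symm.ne_left (by simpa using mem_cylinder_succ hz (hza.trans hys.symm)) hb.symm

theorem homoclinic_neighbors_iff_general (c c' : List Bool) :
    HomAdjacent (homSeq c) (homSeq c') ↔
      ∃ s : List Bool,
        (c = s ++ [true] ∧ c' = s ++ [false]) ∨
        (c = s ++ [false] ∧ c' = s ++ [true]) := by
  constructor
  · intro h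
    have hc := eq_seqPrefix_of_homAdjacent h
    have hc' := eq_seqPrefix_of_homAdjacent h.symm
    have hne := apply_firstDiff_ne h.1
    rw [firstDiff_comm, seqPrefix_succ] at hc'
    rw [seqPrefix_succ, seqPrefix_congr (mem_cylinder_firstDiff _ _)] at hc
    generalize homSeq c (firstDiff (homSeq c) (homSeq c')) = a at hc hne
    generalize homSeq c' (firstDiff (homSeq c) (homSeq c')) = b at hc' hne
    generalize seqPrefix (homSeq c') (firstDiff (homSeq c) (homSeq c')) = s at hc hc'
    refine ⟨s, ?_⟩
    rw [hc, hc']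
    cases a <;> cases b <;> simp at hne ⊢
  · rintro ⟨s, ⟨rfl, rfl⟩ | ⟨rfl, rfl⟩⟩
    · exact homAdjacent_append_singleton s true
    · exact homAdjacent_append_singleton s false

/-- **Neighboring homoclinic orbits in the complete horseshoe.**
Two distinct homoclinic sequences with cores `c` and `c'` are adjacent in the
unimodal order iff their cores are of the form `s·(+)` and `s·(−)` for some
finite string `s`. -/
theorem homoclinic_neighbors_iff (c c' : List Bool) (hcc' : c ≠ c') :
    HomAdjacent (homSeq c) (homSeq c') ↔
      ∃ s : List Bool,
        (c = s ++ [true] ∧ c' = s ++ [false]) ∨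
        (c = s ++ [false] ∧ c' = s ++ [true]) :=
  homoclinic_neighbors_iff_general c c'
end
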